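/- arXiv:2407.21084 — 5 statements merged into one kernel-verified Lean document; each statement's English description precedes it below -/
import Mathlib

section
/- Let ν_l be the non-standardized Student's t-density ν_l(x) = c_μ (1+x²)^{-(μ+1)/2} on ℝ with μ > 0 and normalizing constant c_μ, and let F be its CDF. Then F(x) ~ c_μ/(μ|x|^μ) as x → -∞, and 1 - F(x) ~ c_μ/(μ x^μ) as x → +∞. -/
/-!
The tail `T(x) = ∫_x^∞ (1 + t²)^(-(μ+1)/2) dt` and `x^(-μ)/μ` both vanish at `+∞`, and their
derivatives `-(1 + x²)^(-(μ+1)/2)` and `-x^(-(μ+1))` have ratio tending to `1`, so L'Hôpital's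
rule gives `T(x) ~ x^(-μ)/μ`. The density is even, so `F(x) = c_μ T(-x)`, and `1 - F(x) = c_μ T(x)`
because `c_μ` normalises it: `∫ (1 + x²)^(-s) dx = √π Γ(s - 1/2) / Γ(s)`, as one sees by writing
`(1 + x²)^(-s) Γ(s)` as a Gamma integral in `t` and integrating in `x` first, which is Gaussian.
-/

open MeasureTheory Real Set Filter

open scoped Topology

section StudentIntegral

variable {s : ℝ}

lemma integrable_one_add_sq_rpow_neg_div_two {r : ℝ} (hr : 1 < r) :
    Integrable fun x : ℝ => (1 + x ^ 2) ^ (-r / 2) := by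
  simpa [sq_abs] using integrable_rpow_neg_one_add_norm_sq (E := ℝ) (μ := volume) (by simpa)

lemma integral_Ioi_rpow_mul_exp_neg_one_add_sq_mul (hs : 0 < s) (x : ℝ) :
    ∫ t in Ioi (0 : ℝ), t ^ (s - 1) * rexp (-((1 + x ^ 2) * t)) =
      (1 + x ^ 2) ^ (-s) * Gamma s := by
  have hx : (0 : ℝ) < 1 + x ^ 2 := by positivity
  rw [integral_rpow_mul_exp_neg_mul_Ioi hs hx, one_div, inv_rpow hx.le, rpow_neg hx.le]

lemma integral_rpow_mul_exp_neg_one_add_sq_mul {t : ℝ} (ht : 0 < t) :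
    ∫ x : ℝ, t ^ (s - 1) * rexp (-((1 + x ^ 2) * t)) =
      √π * (rexp (-t) * t ^ (s - 1 / 2 - 1)) := by
  have hsplit : ∀ x : ℝ, t ^ (s - 1) * rexp (-((1 + x ^ 2) * t)) =
      t ^ (s - 1) * rexp (-t) * rexp (-t * x ^ 2) := by
    intro x
    rw [mul_assoc, ← exp_add]
    ring_nf
  simp_rw [hsplit]
  rw [integral_const_mul, integral_gaussian, sqrt_div pi_pos.le, sqrt_eq_rpow t,
    show s - 1 / 2 - 1 = s - 1 - 1 / 2 by ring, rpow_sub ht (s - 1) (1 / 2)]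
  ring

theorem integral_one_add_sq_rpow_neg (hs : 1 / 2 < s) :
    ∫ x : ℝ, (1 + x ^ 2) ^ (-s) = √π * Gamma (s - 1 / 2) / Gamma s := by
  have hs0 : 0 < s := by linarith
  set k : ℝ → ℝ → ℝ := fun x t => t ^ (s - 1) * rexp (-((1 + x ^ 2) * t)) with hk
  have hk_int : Integrable (Function.uncurry k) (volume.prod (volume.restrict (Ioi 0))) := by
    refine (integrable_prod_iff (by fun_prop)).2 ⟨.of_forall fun x => ?_, ?_⟩
    · have hx : (0 : ℝ) < 1 + x ^ 2 := by positivity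
      have h := integrableOn_rpow_mul_exp_neg_mul_rpow (by linarith : -1 < s - 1) zero_lt_one hx
      simp only [rpow_one, neg_mul] at h
      exact h
    · have hint := integrable_one_add_sq_rpow_neg_div_two (r := 2 * s) (by linarith)
      simp only [neg_div, mul_div_cancel_left₀ s two_ne_zero] at hint
      refine (hint.mul_const (Gamma s)).congr (.of_forall fun x => ?_)
      show (1 + x ^ 2) ^ (-s) * Gamma s = ∫ t in Ioi 0, ‖k x t‖
      rw [← integral_Ioi_rpow_mul_exp_neg_one_add_sq_mul hs0]
      refine setIntegral_congr_fun measurableSet_Ioi fun t (ht : 0 < t) => ?_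
      simp only [hk, norm_eq_abs]
      exact (abs_of_nonneg (by positivity)).symm
  have hswap := integral_integral_swap hk_int
  simp only [hk, integral_Ioi_rpow_mul_exp_neg_one_add_sq_mul hs0] at hswap
  rw [eq_div_iff (Gamma_pos_of_pos hs0).ne', ← integral_mul_const, hswap,
    setIntegral_congr_fun measurableSet_Ioi fun t ht => integral_rpow_mul_exp_neg_one_add_sq_mul ht,
    integral_const_mul, Gamma_eq_integral (by linarith)]

end StudentIntegral

section TailAsymptotics

variable {f : ℝ → ℝ} {a : ℝ}

lemma hasDerivAt_integral_Ioi (hfi : IntegrableOn f (Ioi a)) (hfc : ContinuousOn f (Ioi a))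
    {x : ℝ} (hx : a < x) :
    HasDerivAt (fun y => ∫ t in Ioi y, f t) (-f x) x := by
  have hfx : IntervalIntegrable f volume a x :=
    (intervalIntegrable_iff_integrableOn_Ioc_of_le hx.le).2 (hfi.mono_set Ioc_subset_Ioi_self)
  have hderiv : HasDerivAt (fun y => (∫ t in Ioi a, f t) - ∫ t in a..y, f t) (-f x) x := by
    simpa using (intervalIntegral.integral_hasDerivAt_right hfx
      (hfc.stronglyMeasurableAtFilter isOpen_Ioi x hx)
      (hfc.continuousAt (Ioi_mem_nhds hx))).const_sub (∫ t in Ioi a, f t)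
  refine hderiv.congr_of_eventuallyEq ?_
  filter_upwards [Ioi_mem_nhds hx] with y hy
  linarith [intervalIntegral.integral_Ioi_sub_Ioi hfi (le_of_lt hy)]

theorem tendsto_integral_Ioi_div_rpow_neg {μ L : ℝ} (hμ : 0 < μ)
    (hfi : IntegrableOn f (Ioi a)) (hfc : ContinuousOn f (Ioi a))
    (hf : Tendsto (fun t => f t / t ^ (-(μ + 1))) atTop (𝓝 L)) :
    Tendsto (fun x => (∫ t in Ioi x, f t) / (x ^ (-μ) / μ)) atTop (𝓝 L) := by
  have hpos : ∀ x ∈ Ioi (max a 0), 0 < x := fun x hx => (le_max_right a 0).trans_lt hx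
  have hg : ∀ x ∈ Ioi (max a 0), HasDerivAt (fun y : ℝ => y ^ (-μ) / μ) (-x ^ (-(μ + 1))) x := by
    intro x hx
    refine ((hasDerivAt_rpow_const (p := -μ) (Or.inl (hpos x hx).ne')).div_const μ).congr_deriv ?_
    rw [show -μ - 1 = -(μ + 1) by ring]
    field_simp
  refine HasDerivAt.lhopital_zero_atTop_on_Ioi
    (fun x hx => hasDerivAt_integral_Ioi hfi hfc ((le_max_left a 0).trans_lt hx)) hg
    (fun x hx => neg_ne_zero.2 (rpow_pos_of_pos (hpos x hx) _).ne')
    (tendsto_integral_Ioi_zero tendsto_id) ?_ (hf.congr fun t => (neg_div_neg_eq _ _).symm)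
  simpa using (tendsto_rpow_neg_atTop hμ).div_const μ

lemma tendsto_one_add_sq_rpow_div_rpow (r : ℝ) :
    Tendsto (fun t : ℝ => (1 + t ^ 2) ^ (r / 2) / t ^ r) atTop (𝓝 1) := by
  have h : Tendsto (fun t : ℝ => ((t ^ 2)⁻¹ + 1) ^ (r / 2)) atTop (𝓝 1) := by
    simpa using ((tendsto_pow_atTop two_ne_zero).inv_tendsto_atTop.add_const 1).rpow_const
      (p := r / 2) (Or.inl (by norm_num))
  refine h.congr' ?_
  filter_upwards [eventually_gt_atTop 0] with t ht
  have ht2 : (t ^ 2) ^ (r / 2) = t ^ r := by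
    rw [← rpow_natCast, ← rpow_mul ht.le]
    ring_nf
  rw [← ht2, ← div_rpow (by positivity) (by positivity)]
  congr 1
  field_simp

lemma tendsto_integral_Ioi_one_add_sq_rpow_div {μ : ℝ} (hμ : 0 < μ) :
    Tendsto (fun x => (∫ t in Ioi x, (1 + t ^ 2) ^ (-(μ + 1) / 2)) / (x ^ (-μ) / μ))
      atTop (𝓝 1) :=
  tendsto_integral_Ioi_div_rpow_neg hμ (a := 0)
    (integrable_one_add_sq_rpow_neg_div_two (by linarith)).integrableOn
    ((continuous_const.add (continuous_pow 2)).rpow_const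
      fun t => Or.inl (by positivity : (1 : ℝ) + t ^ 2 ≠ 0)).continuousOn
    (tendsto_one_add_sq_rpow_div_rpow _)

end TailAsymptotics

theorem stmt_2 (μ cμ : ℝ) (hμ : 0 < μ)
    (hc : cμ = Real.Gamma ((μ+1)/2) / (Real.Gamma (μ/2) * Real.sqrt Real.pi))
    (ν : ℝ → ℝ) (hν : ∀ x, ν x = cμ * (1 + x^2) ^ (-(μ+1)/2))
    (F : ℝ → ℝ) (hF : ∀ x, F x = ∫ t in Set.Iic x, ν t) :
    Tendsto (fun x => F x / (cμ / (μ * |x| ^ μ))) atBot (nhds 1) ∧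
    Tendsto (fun x => (1 - F x) / (cμ / (μ * x ^ μ))) atTop (nhds 1) := by
  set p : ℝ → ℝ := fun t => (1 + t ^ 2) ^ (-(μ + 1) / 2) with hp
  have hp_int : Integrable p := integrable_one_add_sq_rpow_neg_div_two (by linarith)
  have hΓ₁ := Gamma_pos_of_pos (by linarith : 0 < (μ + 1) / 2)
  have hΓ₂ := Gamma_pos_of_pos (by linarith : 0 < μ / 2)
  have hmass : cμ * ∫ t, p t = 1 := by
    rw [hp, neg_div, integral_one_add_sq_rpow_neg (by linarith), hc,
      show (μ + 1) / 2 - 1 / 2 = μ / 2 by ring]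
    field_simp
  have hF_Iic (x : ℝ) : F x = cμ * ∫ t in Iic x, p t := by
    simp only [hF, hν, hp, integral_const_mul]
  have hF_left (x : ℝ) : F x = cμ * ∫ t in Ioi (-x), p t := by
    rw [hF_Iic, ← integral_comp_neg_Iic]
    simp [hp]
  have hF_right (x : ℝ) : 1 - F x = cμ * ∫ t in Ioi x, p t := by
    rw [← hmass, hF_Iic, ← intervalIntegral.integral_Iic_add_Ioi hp_int.integrableOn
      hp_int.integrableOn]
    ring
  have hratio {y : ℝ} (hy : 0 < y) : cμ * (∫ t in Ioi y, p t) / (cμ / (μ * y ^ μ)) =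
      (∫ t in Ioi y, p t) / (y ^ (-μ) / μ) := by
    rw [rpow_neg hy.le, hc]
    field_simp
  have htail := tendsto_integral_Ioi_one_add_sq_rpow_div hμ
  constructor
  · refine (htail.comp tendsto_neg_atBot_atTop).congr' ?_
    filter_upwards [eventually_lt_atBot 0] with x hx
    rw [Function.comp_apply, hF_left, abs_of_neg hx, hratio (neg_pos.2 hx)]
  · refine htail.congr' ?_
    filter_upwards [eventually_gt_atTop 0] with x hx
    rw [hF_right, hratio hx]
end

section
/- Let ν_l be the Student's t-density ν_l(x) = c_μ(1+x²)^{-(μ+1)/2} with CDF F and inverse F^{-1}: (0,1) → ℝ. Then F^{-1}(u) ~ -(c_μ/μ)^{1/μ} u^{-1/μ} as u → 0⁺, and F^{-1}(u) ~ (c_μ/μ)^{1/μ} (1-u)^{-1/μ} as u → 1⁻. -/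
open MeasureTheory Real Set Filter Topology

/-! The normalisation `∫ ν = 1` comes from writing `Γ(s) (1 + x²)^(-s)` as the Gamma integral
`∫₀^∞ t^(s-1) e^(-(1 + x²) t) dt` and integrating in `x` first, which is Gaussian.
For `t ≥ y > 0`, `(1 + t²)^(-(μ+1)/2)` lies between `(1 + y⁻²)^(-(μ+1)/2) t^(-(μ+1))` and
`t^(-(μ+1))`, so the right tail `R y = ∫_y^∞ ν` satisfies `R y ~ (c_μ/μ) y^(-μ)`, which inverts to
`y ~ (c_μ/μ)^(1/μ) (R y)^(-1/μ)`. As `u → 1⁻`, `F⁻¹ u → ∞` and `1 - u = R (F⁻¹ u)`; as `u → 0⁺`,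
`F⁻¹ u → -∞` and, by symmetry of `ν`, `u = R (-F⁻¹ u)`. -/

lemma lintegral_rpow_mul_exp_neg_mul_Ioi {a r : ℝ} (ha : 0 < a) (hr : 0 < r) :
    ∫⁻ t in Ioi 0, ENNReal.ofReal (t ^ (a - 1) * exp (-(r * t))) =
      ENNReal.ofReal ((1 / r) ^ a * Gamma a) := by
  rw [← integral_rpow_mul_exp_neg_mul_Ioi ha hr, ofReal_integral_eq_lintegral_ofReal]
  · have h := integrableOn_rpow_mul_exp_neg_mul_rpow (by linarith : -1 < a - 1) one_pos hr
    simp only [rpow_one, neg_mul] at h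
    exact h
  · filter_upwards [ae_restrict_mem measurableSet_Ioi] with t (ht : 0 < t)
    positivity

lemma lintegral_exp_neg_mul_sq {b : ℝ} (hb : 0 < b) :
    ∫⁻ x : ℝ, ENNReal.ofReal (exp (-b * x ^ 2)) = ENNReal.ofReal √(π / b) := by
  rw [← integral_gaussian, ofReal_integral_eq_lintegral_ofReal (integrable_exp_neg_mul_sq hb)
    (ae_of_all _ fun x => (exp_pos _).le)]

theorem Gamma_mul_integral_one_add_sq_rpow_neg {s : ℝ} (hs : 1 / 2 < s) :
    Gamma s * ∫ x : ℝ, (1 + x ^ 2) ^ (-s) = √π * Gamma (s - 1 / 2) := by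
  have hs0 : 0 < s := by linarith
  have hGamma : ∀ x : ℝ, ENNReal.ofReal (Gamma s * (1 + x ^ 2) ^ (-s)) =
      ∫⁻ t in Ioi 0, ENNReal.ofReal (t ^ (s - 1) * exp (-((1 + x ^ 2) * t))) := by
    intro x
    rw [lintegral_rpow_mul_exp_neg_mul_Ioi hs0 (by positivity), one_div,
      inv_rpow (by positivity), ← rpow_neg (by positivity), mul_comm]
  have hGauss : ∀ t ∈ Ioi (0 : ℝ),
      ∫⁻ x : ℝ, ENNReal.ofReal (t ^ (s - 1) * exp (-((1 + x ^ 2) * t))) =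
        ENNReal.ofReal √π * ENNReal.ofReal (t ^ (s - 1 / 2 - 1) * exp (-(1 * t))) := by
    intro t (ht : 0 < t)
    calc ∫⁻ x : ℝ, ENNReal.ofReal (t ^ (s - 1) * exp (-((1 + x ^ 2) * t)))
        = ∫⁻ x : ℝ, ENNReal.ofReal (t ^ (s - 1) * exp (-t)) *
            ENNReal.ofReal (exp (-t * x ^ 2)) := by
          refine lintegral_congr fun x => ?_
          rw [← ENNReal.ofReal_mul (by positivity), mul_assoc, ← exp_add]
          ring_nf
      _ = ENNReal.ofReal (t ^ (s - 1) * exp (-t)) * ENNReal.ofReal √(π / t) := by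
          rw [lintegral_const_mul' _ _ ENNReal.ofReal_ne_top, lintegral_exp_neg_mul_sq ht]
      _ = _ := by
          rw [← ENNReal.ofReal_mul (by positivity), ← ENNReal.ofReal_mul (by positivity)]
          congr 1
          rw [sqrt_div' _ ht.le, sqrt_eq_rpow t, show s - 1 / 2 - 1 = (s - 1) + -(1 / 2) by ring,
            rpow_add ht, rpow_neg ht.le, one_mul]
          ring
  have hlint : ∫⁻ x : ℝ, ENNReal.ofReal (Gamma s * (1 + x ^ 2) ^ (-s)) =
      ENNReal.ofReal (√π * Gamma (s - 1 / 2)) := by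
    simp_rw [hGamma]
    rw [lintegral_lintegral_swap (by fun_prop), setLIntegral_congr_fun measurableSet_Ioi hGauss,
      lintegral_const_mul' _ _ ENNReal.ofReal_ne_top,
      lintegral_rpow_mul_exp_neg_mul_Ioi (by linarith) one_pos, ← ENNReal.ofReal_mul (by positivity)]
    simp
  rw [← integral_const_mul, integral_eq_lintegral_of_nonneg_ae (ae_of_all _ fun x => by positivity)
    (Measurable.aestronglyMeasurable (by fun_prop)), hlint, ENNReal.toReal_ofReal]
  have := Gamma_pos_of_pos (by linarith : 0 < s - 1 / 2)
  positivity

lemma integrable_one_add_sq_rpow {μ : ℝ} (hμ : 0 < μ) :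
    Integrable fun x : ℝ => (1 + x ^ 2) ^ (-(μ + 1) / 2) := by
  simpa using integrable_rpow_neg_one_add_norm_sq (E := ℝ) (μ := volume) (r := μ + 1)
    (by simpa using hμ)

lemma sq_rpow_div_two {t : ℝ} (ht : 0 ≤ t) (a : ℝ) : (t ^ 2) ^ (a / 2) = t ^ a := by
  rw [← rpow_natCast, ← rpow_mul ht]
  ring_nf

section TailBounds

variable {μ t : ℝ}

lemma one_add_sq_rpow_le_rpow (hμ : -1 ≤ μ) (ht : 0 < t) :
    (1 + t ^ 2) ^ (-(μ + 1) / 2) ≤ t ^ (-(μ + 1)) := by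
  calc (1 + t ^ 2) ^ (-(μ + 1) / 2) ≤ (t ^ 2) ^ (-(μ + 1) / 2) :=
        rpow_le_rpow_of_nonpos (by positivity) (by linarith) (by linarith)
    _ = t ^ (-(μ + 1)) := sq_rpow_div_two ht.le _

lemma mul_rpow_le_one_add_sq_rpow (hμ : -1 ≤ μ) {x : ℝ} (hx : 0 < x) (hxt : x ≤ t) :
    (1 + x⁻¹ ^ 2) ^ (-(μ + 1) / 2) * t ^ (-(μ + 1)) ≤ (1 + t ^ 2) ^ (-(μ + 1) / 2) := by
  have ht : 0 < t := hx.trans_le hxt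
  have hone : 1 ≤ t * x⁻¹ := by rw [← div_eq_mul_inv, one_le_div hx]; exact hxt
  calc (1 + x⁻¹ ^ 2) ^ (-(μ + 1) / 2) * t ^ (-(μ + 1))
      = (t ^ 2 * (1 + x⁻¹ ^ 2)) ^ (-(μ + 1) / 2) := by
        rw [mul_rpow (by positivity) (by positivity), sq_rpow_div_two ht.le, mul_comm]
    _ ≤ (1 + t ^ 2) ^ (-(μ + 1) / 2) :=
        rpow_le_rpow_of_nonpos (by positivity) (by nlinarith) (by linarith)

lemma integral_Ioi_rpow_neg_add_one (hμ : 0 < μ) {x : ℝ} (hx : 0 < x) :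
    ∫ t in Ioi x, t ^ (-(μ + 1)) = x ^ (-μ) / μ := by
  rw [integral_Ioi_rpow_of_lt (by linarith) hx, show -(μ + 1) + 1 = -μ by ring, neg_div_neg_eq]

end TailBounds

theorem tendsto_rpow_mul_integral_Ioi_one_add_sq_rpow {μ : ℝ} (hμ : 0 < μ) :
    Tendsto (fun x => x ^ μ * ∫ t in Ioi x, (1 + t ^ 2) ^ (-(μ + 1) / 2)) atTop (𝓝 (1 / μ)) := by
  have hint : ∀ x > 0, IntegrableOn (fun t : ℝ => t ^ (-(μ + 1))) (Ioi x) := fun x hx =>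
    integrableOn_Ioi_rpow_of_lt (by linarith) hx
  have hscale : ∀ x > 0, x ^ μ * (x ^ (-μ) / μ) = 1 / μ := fun x hx => by
    rw [rpow_neg hx.le]
    field_simp [(rpow_pos_of_pos hx μ).ne']
  have hupper : ∀ x > 0, x ^ μ * ∫ t in Ioi x, (1 + t ^ 2) ^ (-(μ + 1) / 2) ≤ 1 / μ := by
    intro x hx
    rw [← hscale x hx, ← integral_Ioi_rpow_neg_add_one hμ hx]
    refine mul_le_mul_of_nonneg_left ?_ (by positivity)
    exact setIntegral_mono_on (integrable_one_add_sq_rpow hμ).integrableOn (hint x hx)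
      measurableSet_Ioi fun t ht => one_add_sq_rpow_le_rpow (by linarith) (hx.trans ht)
  have hlower : ∀ x > 0, (1 + x⁻¹ ^ 2) ^ (-(μ + 1) / 2) * (1 / μ) ≤
      x ^ μ * ∫ t in Ioi x, (1 + t ^ 2) ^ (-(μ + 1) / 2) := by
    intro x hx
    rw [← hscale x hx, ← integral_Ioi_rpow_neg_add_one hμ hx, mul_left_comm,
      ← integral_const_mul]
    refine mul_le_mul_of_nonneg_left ?_ (by positivity)
    exact setIntegral_mono_on ((hint x hx).const_mul _) (integrable_one_add_sq_rpow hμ).integrableOn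
      measurableSet_Ioi fun t ht => mul_rpow_le_one_add_sq_rpow (by linarith) hx (le_of_lt ht)
  have hlim : Tendsto (fun x : ℝ => (1 + x⁻¹ ^ 2) ^ (-(μ + 1) / 2) * (1 / μ)) atTop
      (𝓝 (1 / μ)) := by
    have h := ((tendsto_inv_atTop_zero.pow 2).const_add 1).rpow_const (p := -(μ + 1) / 2)
      (Or.inl (by norm_num))
    simpa using h.mul_const (1 / μ)
  exact tendsto_of_tendsto_of_tendsto_of_le_of_le' hlim tendsto_const_nhds
    (eventually_gt_atTop 0 |>.mono hlower) (eventually_gt_atTop 0 |>.mono hupper)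

theorem tendsto_div_mul_rpow_of_tendsto_rpow_mul {G : ℝ → ℝ} {L μ : ℝ} (hμ : 0 < μ) (hL : 0 < L)
    (h : Tendsto (fun x => x ^ μ * G x) atTop (𝓝 L)) :
    Tendsto (fun x => x / (L ^ (1 / μ) * G x ^ (-1 / μ))) atTop (𝓝 1) := by
  have h1 : Tendsto (fun x => (x ^ μ * G x / L) ^ (1 / μ)) atTop (𝓝 1) := by
    simpa [hL.ne'] using (h.div_const L).rpow_const (p := 1 / μ) (Or.inr (by positivity))
  refine h1.congr' ?_
  filter_upwards [eventually_gt_atTop 0, h.eventually (eventually_gt_nhds hL)] with x hx hxG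
  have hG : 0 < G x := pos_of_mul_pos_right hxG (by positivity)
  rw [div_rpow (by positivity) hL.le, mul_rpow (by positivity) hG.le, ← rpow_mul hx.le,
    mul_one_div_cancel hμ.ne', rpow_one, show -1 / μ = -(1 / μ) by ring, rpow_neg hG.le]
  field_simp

lemma setIntegral_pos_of_pos {X : Type*} [MeasurableSpace X] {μ : Measure X} {s : Set X}
    {f : X → ℝ} (hf : ∀ x, 0 < f x) (hfi : IntegrableOn f s μ) (hs : μ s ≠ 0) :
    0 < ∫ x in s, f x ∂μ := by
  rw [setIntegral_pos_iff_support_of_nonneg_ae (ae_of_all _ fun x => (hf x).le) hfi]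
  simpa [Function.support, fun x => (hf x).ne'] using pos_iff_ne_zero.2 hs

theorem Monotone.tendsto_atBot_of_eventually_rightInverse {α β : Type*} [LinearOrder α] [LinearOrder β]
    [TopologicalSpace β] [OrderTopology β] {F : α → β} {G : β → α} {a : β} (hF : Monotone F)
    (ha : ∀ M, a < F M) (hG : ∀ᶠ u in 𝓝[>] a, F (G u) = u) : Tendsto G (𝓝[>] a) atBot := by
  refine tendsto_atBot.2 fun M => ?_
  filter_upwards [hG, Ioo_mem_nhdsGT (ha M)] with u hu huM
  by_contra! h
  exact (hu ▸ hF h.le).not_gt huM.2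

theorem Monotone.tendsto_atTop_of_eventually_rightInverse {α β : Type*} [LinearOrder α] [LinearOrder β]
    [TopologicalSpace β] [OrderTopology β] {F : α → β} {G : β → α} {b : β} (hF : Monotone F)
    (hb : ∀ M, F M < b) (hG : ∀ᶠ u in 𝓝[<] b, F (G u) = u) : Tendsto G (𝓝[<] b) atTop := by
  refine tendsto_atTop.2 fun M => ?_
  filter_upwards [hG, Ioo_mem_nhdsLT (hb M)] with u hu huM
  by_contra! h
  exact (hu ▸ hF h.le).not_gt huM.1

theorem stmt_3_general (μ cμ : ℝ) (hμ : 0 < μ)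
    (hc : cμ = Real.Gamma ((μ+1)/2) / (Real.Gamma (μ/2) * Real.sqrt Real.pi))
    (ν : ℝ → ℝ) (hν : ∀ x, ν x = cμ * (1 + x^2) ^ (-(μ+1)/2))
    (F : ℝ → ℝ) (hF : ∀ x, F x = ∫ t in Set.Iic x, ν t)
    (Finv : ℝ → ℝ)
    (hFinv : ∀ u ∈ Set.Ioo (0:ℝ) 1, F (Finv u) = u) :
    Tendsto (fun u => Finv u / (-(cμ / μ) ^ (1/μ) * u ^ (-1/μ)))
      (nhdsWithin 0 (Set.Ioi 0)) (nhds 1) ∧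
    Tendsto (fun u => Finv u / ((cμ / μ) ^ (1/μ) * (1 - u) ^ (-1/μ)))
      (nhdsWithin 1 (Set.Iio 1)) (nhds 1) := by
  have hcμ : 0 < cμ := by rw [hc]; positivity
  have hν' : ν = fun t => cμ * (1 + t ^ 2) ^ (-(μ + 1) / 2) := funext hν
  have hνint : Integrable ν := hν' ▸ (integrable_one_add_sq_rpow hμ).const_mul cμ
  have hνpos : ∀ t, 0 < ν t := fun t => by rw [hν]; positivity
  have hνtot : ∫ t, ν t = 1 := by
    have h := Gamma_mul_integral_one_add_sq_rpow_neg (s := (μ + 1) / 2) (by linarith)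
    rw [show (μ + 1) / 2 - 1 / 2 = μ / 2 by ring, ← neg_div] at h
    rw [hν', integral_const_mul, hc, div_mul_eq_mul_div, h]
    field_simp
  set R := fun y => ∫ t in Ioi y, ν t with hR
  have hR_asymp : Tendsto (fun y => y / ((cμ / μ) ^ (1 / μ) * R y ^ (-1 / μ))) atTop (𝓝 1) := by
    refine tendsto_div_mul_rpow_of_tendsto_rpow_mul hμ (by positivity) ?_
    convert (tendsto_rpow_mul_integral_Ioi_one_add_sq_rpow hμ).const_mul cμ using 1
    · ext y
      simp only [hR, hν, integral_const_mul]
      ring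
    · rw [mul_one_div]
  have hF_neg : ∀ y, F (-y) = R y := fun y => by
    simp only [hF, hR, ← integral_comp_neg_Ioi, hν, neg_sq]
  have hF_add_R : ∀ y, F y + R y = 1 := fun y => by
    rw [hF, intervalIntegral.integral_Iic_add_Ioi hνint.integrableOn hνint.integrableOn, hνtot]
  have hR_pos : ∀ y, 0 < R y := fun y =>
    setIntegral_pos_of_pos hνpos hνint.integrableOn (by simp)
  have hF_mono : Monotone F := fun a b hab => by
    rw [hF, hF]
    exact setIntegral_mono_set hνint.integrableOn (ae_of_all _ fun t => (hνpos t).le)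
      (Iic_subset_Iic.2 hab).eventuallyLE
  constructor
  · have hG : Tendsto Finv (𝓝[>] 0) atBot :=
      hF_mono.tendsto_atBot_of_eventually_rightInverse (fun M => neg_neg M ▸ hF_neg (-M) ▸ hR_pos (-M))
        (by filter_upwards [Ioo_mem_nhdsGT one_pos] using hFinv)
    refine (hR_asymp.comp (tendsto_neg_atBot_atTop.comp hG)).congr' ?_
    filter_upwards [Ioo_mem_nhdsGT one_pos] with u hu
    rw [Function.comp_apply, Function.comp_apply, ← hF_neg, neg_neg, hFinv u hu, neg_mul, div_neg,
      neg_div]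
  · have hG : Tendsto Finv (𝓝[<] 1) atTop :=
      hF_mono.tendsto_atTop_of_eventually_rightInverse (fun M => by linarith [hF_add_R M, hR_pos M])
        (by filter_upwards [Ioo_mem_nhdsLT one_pos] using hFinv)
    refine (hR_asymp.comp hG).congr' ?_
    filter_upwards [Ioo_mem_nhdsLT one_pos] with u hu
    rw [Function.comp_apply, show R (Finv u) = 1 - u by linarith [hF_add_R (Finv u), hFinv u hu]]

theorem stmt_3 (μ cμ : ℝ) (hμ : 0 < μ)
    (hc : cμ = Real.Gamma ((μ+1)/2) / (Real.Gamma (μ/2) * Real.sqrt Real.pi))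
    (ν : ℝ → ℝ) (hν : ∀ x, ν x = cμ * (1 + x^2) ^ (-(μ+1)/2))
    (F : ℝ → ℝ) (hF : ∀ x, F x = ∫ t in Set.Iic x, ν t)
    (Finv : ℝ → ℝ)
    (hFinv : ∀ u ∈ Set.Ioo (0:ℝ) 1, F (Finv u) = u)
    (hFinv' : ∀ x, Finv (F x) = x) :
    Tendsto (fun u => Finv u / (-(cμ / μ) ^ (1/μ) * u ^ (-1/μ)))
      (nhdsWithin 0 (Set.Ioi 0)) (nhds 1) ∧
    Tendsto (fun u => Finv u / ((cμ / μ) ^ (1/μ) * (1 - u) ^ (-1/μ)))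
      (nhdsWithin 1 (Set.Iio 1)) (nhds 1) :=
  stmt_3_general μ cμ hμ hc ν hν F hF Finv hFinv
end

section
/- Let μ > 0, r ≥ 1 an integer, p ∈ ℕ, q ≥ 0, and d ≥ 1 with p + (r - 1/2)μ < q. Then the function l(u) = (1 + Σ_{i=1}^d u_i^{-1/μ}(1-u_i)^{-1/μ})^{2(p - q + rμ)} is Lebesgue integrable on (0,1)^d. -/
open MeasureTheory Real Set

/-!
With `α = 2(p - q + rμ)` the hypothesis says `α < μ`; raising the exponent to `β = max α 0` keeps
`β < μ` and only increases the integrand, whose base is at least `1`. Since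
`1 + ∑ xᵢ ≤ ∏ (1 + xᵢ)` for `xᵢ ≥ 0`, the integrand is dominated by a product of one-variable
functions `(1 + t^(-1/μ) (1 - t)^(-1/μ))^β ≤ 2^β (1 + t^(-β/μ) (1 - t)^(-β/μ))`, and these are
integrable on `(0, 1)` because `β/μ < 1`.
-/

theorem Finset.one_add_sum_le_prod_one_add {ι R : Type*} [CommSemiring R] [PartialOrder R]
    [IsOrderedRing R] (s : Finset ι) {x : ι → R} (hx : ∀ i ∈ s, 0 ≤ x i) :
    1 + ∑ i ∈ s, x i ≤ ∏ i ∈ s, (1 + x i) := by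
  classical
  induction s using Finset.induction_on with
  | empty => simp
  | insert a s ha ih =>
    rw [Finset.sum_insert ha, Finset.prod_insert ha]
    have hxa : 0 ≤ x a := hx a (Finset.mem_insert_self a s)
    have hprod : 1 + ∑ i ∈ s, x i ≤ ∏ i ∈ s, (1 + x i) :=
      ih fun i hi ↦ hx i (Finset.mem_insert_of_mem hi)
    have hone : 1 ≤ ∏ i ∈ s, (1 + x i) :=
      le_trans (le_add_of_nonneg_right (Finset.sum_nonneg fun i hi ↦ hx i
        (Finset.mem_insert_of_mem hi))) hprod
    calc 1 + (x a + ∑ i ∈ s, x i) = (1 + ∑ i ∈ s, x i) + x a * 1 := by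
          rw [mul_one, add_comm (x a), ← add_assoc, add_right_comm]
      _ ≤ ∏ i ∈ s, (1 + x i) + x a * ∏ i ∈ s, (1 + x i) := by gcongr
      _ = (1 + x a) * ∏ i ∈ s, (1 + x i) := by rw [add_mul, one_mul]

theorem Real.one_add_rpow_le {x a : ℝ} (hx : 0 ≤ x) (ha : 0 ≤ a) :
    (1 + x) ^ a ≤ 2 ^ a * (1 + x ^ a) := by
  have hxa : 0 ≤ x ^ a := rpow_nonneg hx a
  have h2a : 0 ≤ (2 : ℝ) ^ a := rpow_nonneg zero_le_two a
  rcases le_total x 1 with h | h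
  · have : (1 + x) ^ a ≤ 2 ^ a := rpow_le_rpow (by positivity) (by linarith) ha
    nlinarith
  · have : (1 + x) ^ a ≤ 2 ^ a * x ^ a :=
      (rpow_le_rpow (by positivity) (by linarith) ha).trans_eq (mul_rpow zero_le_two hx)
    nlinarith

/-- Whichever of `t`, `1 - t` is at least `1/2` contributes a factor at most `2 ^ s`. -/
theorem Real.rpow_neg_mul_one_sub_rpow_neg_le {t s : ℝ} (ht₀ : 0 < t) (ht₁ : t < 1) (hs : 0 ≤ s) :
    t ^ (-s) * (1 - t) ^ (-s) ≤ 2 ^ s * (t ^ (-s) + (1 - t) ^ (-s)) := by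
  have hhalf : ∀ {y : ℝ}, 1 / 2 ≤ y → y ^ (-s) ≤ 2 ^ s := by
    intro y hy
    calc y ^ (-s) ≤ (1 / 2) ^ (-s) := rpow_le_rpow_of_nonpos (by norm_num) hy (by linarith)
      _ = 2 ^ s := by rw [one_div, inv_rpow zero_le_two, rpow_neg zero_le_two, inv_inv]
  have h₀ : 0 ≤ t ^ (-s) := rpow_nonneg ht₀.le _
  have h₁ : 0 ≤ (1 - t) ^ (-s) := rpow_nonneg (by linarith) _
  rcases le_total t (1 / 2) with h | h
  · nlinarith [hhalf (y := 1 - t) (by linarith)]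
  · nlinarith [hhalf h]

theorem integrableOn_rpow_neg_mul_one_sub_rpow_neg {s : ℝ} (hs₀ : 0 ≤ s) (hs₁ : s < 1) :
    IntegrableOn (fun t : ℝ ↦ t ^ (-s) * (1 - t) ^ (-s)) (Ioo 0 1) := by
  have hleft : IntegrableOn (fun t : ℝ ↦ t ^ (-s)) (Ioo 0 1) :=
    (intervalIntegral.integrableOn_Ioo_rpow_iff zero_lt_one).2 (by linarith)
  have hright : IntegrableOn (fun t : ℝ ↦ (1 - t) ^ (-s)) (Ioo 0 1) := by
    rw [← intervalIntegrable_iff_integrableOn_Ioo_of_le zero_le_one]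
    simpa using (intervalIntegral.intervalIntegrable_rpow' (r := -s) (a := 0) (b := 1)
      (by linarith)).comp_sub_left 1 |>.symm
  refine Integrable.mono' ((hleft.add hright).const_mul (2 ^ s)) (by fun_prop) ?_
  filter_upwards [ae_restrict_mem measurableSet_Ioo] with t ⟨ht₀, ht₁⟩
  rw [norm_of_nonneg (mul_nonneg (rpow_nonneg ht₀.le _) (rpow_nonneg (by linarith) _))]
  exact rpow_neg_mul_one_sub_rpow_neg_le ht₀ ht₁ hs₀

theorem MeasureTheory.IntegrableOn.fintype_prod_pi {ι E 𝕜 : Type*} [Fintype ι]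
    [RCLike 𝕜] [MeasurableSpace E] {μ : ι → Measure E} [∀ i, SigmaFinite (μ i)]
    {f : ι → E → 𝕜} {s : ι → Set E} (hf : ∀ i, IntegrableOn (f i) (s i) (μ i)) :
    IntegrableOn (fun x : ι → E ↦ ∏ i, f i (x i)) (univ.pi s) (Measure.pi μ) := by
  rw [IntegrableOn, Measure.restrict_pi_pi]
  exact Integrable.fintype_prod hf

theorem integrableOn_one_add_rpow_mul_one_sub_rpow_rpow {μ β : ℝ} (hμ : 0 < μ) (hβ₀ : 0 ≤ β)
    (hβμ : β < μ) :
    IntegrableOn (fun t : ℝ ↦ (1 + t ^ (-1 / μ) * (1 - t) ^ (-1 / μ)) ^ β) (Ioo 0 1) := by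
  set s := β / μ
  have hs : -1 / μ * β = -s := by simp only [s]; ring
  have hbound : IntegrableOn (fun t : ℝ ↦ 2 ^ β * (1 + t ^ (-s) * (1 - t) ^ (-s))) (Ioo 0 1) :=
    ((integrableOn_const (by simp)).add (integrableOn_rpow_neg_mul_one_sub_rpow_neg
      (div_nonneg hβ₀ hμ.le) ((div_lt_one hμ).2 hβμ))).const_mul _
  refine Integrable.mono' hbound (by fun_prop) ?_
  filter_upwards [ae_restrict_mem measurableSet_Ioo] with t ⟨ht₀, ht₁⟩
  have h₀ : 0 ≤ t ^ (-1 / μ) := rpow_nonneg ht₀.le _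
  have h₁ : 0 ≤ (1 - t) ^ (-1 / μ) := rpow_nonneg (by linarith) _
  rw [norm_of_nonneg (rpow_nonneg (by positivity) _)]
  convert one_add_rpow_le (mul_nonneg h₀ h₁) hβ₀ using 3
  rw [mul_rpow h₀ h₁, ← rpow_mul ht₀.le, ← rpow_mul (by linarith), hs]

theorem Real.rpow_one_add_sum_le_prod {ι : Type*} (s : Finset ι) {x : ι → ℝ}
    (hx : ∀ i ∈ s, 0 ≤ x i) {α β : ℝ} (hαβ : α ≤ β) (hβ : 0 ≤ β) :
    (1 + ∑ i ∈ s, x i) ^ α ≤ ∏ i ∈ s, (1 + x i) ^ β := by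
  have hsum : 0 ≤ ∑ i ∈ s, x i := Finset.sum_nonneg hx
  calc (1 + ∑ i ∈ s, x i) ^ α ≤ (1 + ∑ i ∈ s, x i) ^ β :=
        rpow_le_rpow_of_exponent_le (by linarith) hαβ
    _ ≤ (∏ i ∈ s, (1 + x i)) ^ β :=
        rpow_le_rpow (by linarith) (s.one_add_sum_le_prod_one_add hx) hβ
    _ = ∏ i ∈ s, (1 + x i) ^ β :=
        (finsetProd_rpow s _ (fun i hi ↦ by linarith [hx i hi]) β).symm

theorem stmt_9_general (μ : ℝ) (hμ : 0 < μ) (r : ℕ) (p : ℕ) (q : ℝ)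
    (d : ℕ)
    (hcond : (p : ℝ) + ((r : ℝ) - 1/2) * μ < q) :
    MeasureTheory.IntegrableOn
      (fun u : Fin d → ℝ =>
        (1 + ∑ i, (u i) ^ (-1/μ) * (1 - u i) ^ (-1/μ)) ^ (2 * ((p : ℝ) - q + r * μ)))
      (Set.univ.pi fun _ : Fin d => Set.Ioo (0:ℝ) 1) := by
  set α := 2 * ((p : ℝ) - q + r * μ)
  set β := max α 0
  have hβμ : β < μ := max_lt (by simp only [α]; linarith) hμ
  have hprod : IntegrableOn
      (fun u : Fin d → ℝ ↦ ∏ i, (1 + u i ^ (-1 / μ) * (1 - u i) ^ (-1 / μ)) ^ β)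
      (univ.pi fun _ ↦ Ioo 0 1) :=
    IntegrableOn.fintype_prod_pi fun _ ↦
      integrableOn_one_add_rpow_mul_one_sub_rpow_rpow hμ (le_max_right α 0) hβμ
  refine Integrable.mono' hprod (Measurable.aestronglyMeasurable (by fun_prop)) ?_
  filter_upwards [ae_restrict_mem (MeasurableSet.univ_pi fun _ ↦ measurableSet_Ioo)] with u hu
  have hx : ∀ i ∈ Finset.univ, 0 ≤ u i ^ (-1 / μ) * (1 - u i) ^ (-1 / μ) := fun i _ ↦
    mul_nonneg (rpow_nonneg (hu i trivial).1.le _) (rpow_nonneg (by linarith [(hu i trivial).2]) _)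
  rw [norm_of_nonneg (rpow_nonneg (by linarith [Finset.sum_nonneg hx]) _)]
  exact rpow_one_add_sum_le_prod _ hx (le_max_left α 0) (le_max_right α 0)

theorem stmt_9 (μ : ℝ) (hμ : 0 < μ) (r : ℕ) (hr : 1 ≤ r) (p : ℕ) (q : ℝ) (hq : 0 ≤ q)
    (d : ℕ) (hd : 1 ≤ d)
    (hcond : (p : ℝ) + ((r : ℝ) - 1/2) * μ < q) :
    MeasureTheory.IntegrableOn
      (fun u : Fin d → ℝ =>
        (1 + ∑ i, (u i) ^ (-1/μ) * (1 - u i) ^ (-1/μ)) ^ (2 * ((p : ℝ) - q + r * μ)))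
      (Set.univ.pi fun _ : Fin d => Set.Ioo (0:ℝ) 1) :=
  stmt_9_general μ hμ r p q d hcond
end

section
/- Let (φₖ)_{k∈ℕ^d} be a complete orthonormal family in L²(ν) for a probability measure ν on ℝ^d, let y ∈ L²(ν) with expansion y = Σₖ αₖφₖ, and let Γ ⊂ ℕ^d be finite. Suppose (X^m, S^m), m = 1,…,M, are i.i.d. with X¹ ~ ν and S¹ square integrable satisfying E[S¹ | X¹] = y(X¹). Define the estimator ȳ = Σ_{k∈Γ} ᾱₖ φₖ with ᾱₖ = M^{-1} Σ_m S^m φₖ(X^m). Then E[‖ȳ - y‖²_{L²(ν)}] ≤ Σ_{k∉Γ} αₖ² + (L_Γ/M) E[(S¹)²], where L_Γ = Σ_{k∈Γ} ‖φₖ‖²_∞. -/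
/-! For each fixed sample, orthonormality of `(φ k)` splits the L²(ν)-error of the truncated
expansion with coefficients `c k` as `∑_{k ∈ Γ} (c k - α k)² + (‖y‖² - ∑_{k ∈ Γ} (α k)²)`, and by
Parseval (completeness) the second term is the tail `∑_{k ∉ Γ} (α k)²`. Each estimated coefficient
`ᾱ k` is the sample mean of the i.i.d. variables `S m * φ k (X m)`, whose common mean is `α k` by
the tower property and `E[S | X] = y(X)`; hence `E (ᾱ k - α k)² = Var (S * φ k (X)) / M`, which is
at most `(Cφ k)² E S² / M`. -/

open MeasureTheory Real Set
open ProbabilityTheory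

section L2Expansion

variable {β ι : Type*} [MeasurableSpace β] {μ : Measure β} {φ : ι → β → ℝ}

lemma real_inner_toLp_toLp {f g : β → ℝ} (hf : MemLp f 2 μ) (hg : MemLp g 2 μ) :
    inner ℝ (hf.toLp f) (hg.toLp g) = ∫ x, f x * g x ∂μ := by
  rw [L2.inner_def]
  refine integral_congr_ae ?_
  filter_upwards [hf.coeFn_toLp, hg.coeFn_toLp] with x hfx hgx
  simp [hfx, hgx, mul_comm]

lemma integral_sum_mul_mul (hφ : ∀ k, MemLp (φ k) 2 μ) {g : β → ℝ}
    (hg : MemLp g 2 μ) (Γ : Finset ι) (c : ι → ℝ) :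
    ∫ x, (∑ k ∈ Γ, c k * φ k x) * g x ∂μ = ∑ k ∈ Γ, c k * ∫ x, φ k x * g x ∂μ := by
  simp_rw [Finset.sum_mul, mul_assoc]
  rw [integral_finsetSum (f := fun k x => c k * (φ k x * g x)) _
    fun k _ => ((hφ k).integrable_mul hg).const_mul (c k)]
  simp_rw [integral_const_mul]

lemma integral_sum_mul_mul_self [DecidableEq ι] (hφ : ∀ k, MemLp (φ k) 2 μ)
    (hortho : ∀ k k', ∫ x, φ k x * φ k' x ∂μ = if k = k' then 1 else 0)
    (Γ : Finset ι) (c : ι → ℝ) :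
    ∫ x, (∑ k ∈ Γ, c k * φ k x) * (∑ k ∈ Γ, c k * φ k x) ∂μ = ∑ k ∈ Γ, c k ^ 2 := by
  have hu : MemLp (fun x => ∑ k ∈ Γ, c k * φ k x) 2 μ :=
    memLp_finsetSum _ fun k _ => (hφ k).const_mul (c k)
  have hcoef : ∀ k ∈ Γ, ∫ x, φ k x * ∑ k' ∈ Γ, c k' * φ k' x ∂μ = c k := fun k hk => by
    simp_rw [mul_comm (φ k _), integral_sum_mul_mul hφ (hφ k), hortho, mul_ite, mul_one, mul_zero,
      Finset.sum_ite_eq', if_pos hk]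
  rw [integral_sum_mul_mul hφ hu]
  exact Finset.sum_congr rfl fun k hk => by rw [hcoef k hk, sq]

lemma integral_sq_sum_mul_sub [DecidableEq ι] (hφ : ∀ k, MemLp (φ k) 2 μ)
    (hortho : ∀ k k', ∫ x, φ k x * φ k' x ∂μ = if k = k' then 1 else 0)
    {y : β → ℝ} (hy : MemLp y 2 μ) (Γ : Finset ι) (c : ι → ℝ) :
    ∫ x, ((∑ k ∈ Γ, c k * φ k x) - y x) ^ 2 ∂μ
      = ∑ k ∈ Γ, (c k - ∫ x, y x * φ k x ∂μ) ^ 2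
        + (∫ x, y x ^ 2 ∂μ - ∑ k ∈ Γ, (∫ x, y x * φ k x ∂μ) ^ 2) := by
  set u := fun x => ∑ k ∈ Γ, c k * φ k x
  have hu : MemLp u 2 μ := memLp_finsetSum _ fun k _ => (hφ k).const_mul (c k)
  have hexpand : (fun x => (u x - y x) ^ 2) = fun x => u x * u x - 2 * (u x * y x) + y x ^ 2 :=
    funext fun x => by ring
  have huu : Integrable (fun x => u x * u x) μ := hu.integrable_mul hu
  have huy : Integrable (fun x => u x * y x) μ := hu.integrable_mul hy
  have huuy : Integrable (fun x => u x * u x - 2 * (u x * y x)) μ := huu.sub (huy.const_mul 2)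
  rw [hexpand, integral_add huuy hy.integrable_sq,
    integral_sub huu (huy.const_mul 2), integral_const_mul,
    integral_sum_mul_mul_self hφ hortho, integral_sum_mul_mul hφ hy]
  simp only [mul_comm (φ _ _) (y _), sub_sq, Finset.sum_add_distrib, Finset.sum_sub_distrib,
    Finset.mul_sum, mul_assoc]
  ring

lemma hasSum_sq_integral_mul_of_complete [DecidableEq ι] (hφ : ∀ k, MemLp (φ k) 2 μ)
    (hortho : ∀ k k', ∫ x, φ k x * φ k' x ∂μ = if k = k' then 1 else 0)
    (hcomplete : ∀ v : β → ℝ, Measurable v → Integrable (fun x => v x ^ 2) μ →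
      (∀ k, ∫ x, v x * φ k x ∂μ = 0) → ∀ᵐ x ∂μ, v x = 0)
    {y : β → ℝ} (hy : MemLp y 2 μ) :
    HasSum (fun k => (∫ x, y x * φ k x ∂μ) ^ 2) (∫ x, y x ^ 2 ∂μ) := by
  set e : ι → Lp ℝ 2 μ := fun k => (hφ k).toLp (φ k)
  have he : Orthonormal ℝ e := orthonormal_iff_ite.2 fun k k' => by
    simp only [e, real_inner_toLp_toLp, hortho]
  have hdense : (Submodule.span ℝ (Set.range e))ᗮ = ⊥ := by
    refine (Submodule.eq_bot_iff _).2 fun v hv => Lp.eq_zero_iff_ae_eq_zero.2 ?_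
    refine hcomplete _ (Lp.stronglyMeasurable v).measurable (Lp.memLp v).integrable_sq fun k => ?_
    have hinner := real_inner_toLp_toLp (hφ k) (Lp.memLp v)
    rw [Lp.toLp_coeFn, hv (e k) (Submodule.subset_span (Set.mem_range_self k))] at hinner
    simp_rw [mul_comm _ (φ k _), hinner]
  have hsum := (HilbertBasis.mkOfOrthogonalEqBot he hdense).hasSum_inner_mul_inner
    (hy.toLp y) (hy.toLp y)
  simp only [HilbertBasis.coe_mkOfOrthogonalEqBot, e, real_inner_toLp_toLp] at hsum
  simp_rw [sq, mul_comm (φ _ _) (y _)] at hsum ⊢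
  exact hsum

end L2Expansion

section MonteCarlo

variable {Ω E : Type*} [MeasurableSpace Ω] [mE : MeasurableSpace E] {P : Measure Ω}

lemma integral_sq_sampleMean_sub_le [IsProbabilityMeasure P] {ι : Type*} [Fintype ι] [Nonempty ι]
    {Z : ι → Ω → ℝ} (hZ : ∀ i, MemLp (Z i) 2 P)
    (hindep : Pairwise fun i j => IndepFun (Z i) (Z j) P) {a b : ℝ}
    (hmean : ∀ i, ∫ ω, Z i ω ∂P = a) (hsq : ∀ i, ∫ ω, Z i ω ^ 2 ∂P ≤ b) :
    ∫ ω, ((Fintype.card ι : ℝ)⁻¹ * ∑ i, Z i ω - a) ^ 2 ∂P ≤ b / Fintype.card ι := by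
  set n : ℝ := (Fintype.card ι : ℝ) with hn_def
  have hn : n ≠ 0 := Nat.cast_ne_zero.2 Fintype.card_ne_zero
  have hsum : MemLp (∑ i, Z i) 2 P := memLp_finsetSum' _ fun i _ => hZ i
  have hmean_avg : ∫ ω, n⁻¹ * ∑ i, Z i ω ∂P = a := by
    rw [integral_const_mul, integral_finsetSum _ fun i _ => (hZ i).integrable one_le_two]
    simp [hmean, n, hn]
  calc ∫ ω, (n⁻¹ * ∑ i, Z i ω - a) ^ 2 ∂P
      = Var[fun ω => n⁻¹ * (∑ i, Z i) ω; P] := by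
        rw [variance_eq_integral (hsum.const_mul _).aestronglyMeasurable.aemeasurable]
        simp only [Finset.sum_apply, hmean_avg]
    _ = n⁻¹ ^ 2 * ∑ i, Var[Z i; P] := by
        rw [variance_const_mul, IndepFun.variance_sum (fun i _ => hZ i)
          fun i _ j _ hij => hindep hij]
    _ ≤ n⁻¹ ^ 2 * ∑ _i : ι, b := by
        gcongr with i
        exact (variance_le_expectation_sq (hZ i).1).trans (hsq i)
    _ = b / n := by
        rw [Finset.sum_const, Finset.card_univ, nsmul_eq_mul, ← hn_def]
        field_simp

lemma integral_mul_comp_eq_of_condExp_eq [IsFiniteMeasure P] {X : Ω → E} {S : Ω → ℝ}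
    {y g : E → ℝ} (hX : Measurable X) (hS : Integrable S P)
    (hcond : P[S | mE.comap X] =ᵐ[P] fun ω => y (X ω)) (hy : Measurable y) (hg : Measurable g)
    {C : ℝ} (hgC : ∀ x, |g x| ≤ C) :
    ∫ ω, S ω * g (X ω) ∂P = ∫ x, y x * g x ∂P.map X := by
  have hgX : StronglyMeasurable[mE.comap X] (fun ω => g (X ω)) :=
    (hg.comp (comap_measurable X)).stronglyMeasurable
  have hgXS : Integrable ((fun ω => g (X ω)) * S) P :=
    hS.bdd_mul (hg.comp hX).aestronglyMeasurable (ae_of_all _ fun ω => hgC (X ω))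
  calc ∫ ω, S ω * g (X ω) ∂P
      = ∫ ω, (P[(fun ω => g (X ω)) * S | mE.comap X]) ω ∂P := by
        rw [integral_condExp hX.comap_le]
        simp_rw [Pi.mul_apply, mul_comm]
    _ = ∫ ω, y (X ω) * g (X ω) ∂P := by
        refine integral_congr_ae ?_
        filter_upwards [condExp_mul_of_stronglyMeasurable_left hgX hgXS hS, hcond] with ω h1 h2
        rw [h1, Pi.mul_apply, h2, mul_comm]
    _ = ∫ x, y x * g x ∂P.map X :=
        (integral_map hX.aemeasurable (hy.mul hg).aestronglyMeasurable).symm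

lemma integral_sq_sampleMean_mul_comp_sub_le [IsProbabilityMeasure P] {ι : Type*} [Fintype ι]
    {X : ι → Ω → E} {S : ι → Ω → ℝ} {i₀ : ι} (hX : ∀ i, Measurable (X i))
    (hS : ∀ i, Measurable (S i)) (hindep : iIndepFun (fun i ω => (X i ω, S i ω)) P)
    (hident : ∀ i, P.map (fun ω => (X i ω, S i ω)) = P.map (fun ω => (X i₀ ω, S i₀ ω)))
    (hS₀ : MemLp (S i₀) 2 P) {y g : E → ℝ}
    (hcond : P[S i₀ | mE.comap (X i₀)] =ᵐ[P] fun ω => y (X i₀ ω)) (hy : Measurable y)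
    (hg : Measurable g) {C : ℝ} (hgC : ∀ x, |g x| ≤ C) :
    Integrable (fun ω => ((Fintype.card ι : ℝ)⁻¹ * ∑ i, S i ω * g (X i ω)
        - ∫ x, y x * g x ∂P.map (X i₀)) ^ 2) P ∧
      ∫ ω, ((Fintype.card ι : ℝ)⁻¹ * ∑ i, S i ω * g (X i ω)
        - ∫ x, y x * g x ∂P.map (X i₀)) ^ 2 ∂P
      ≤ (C ^ 2 * ∫ ω, S i₀ ω ^ 2 ∂P) / Fintype.card ι := by
  have : Nonempty ι := ⟨i₀⟩
  set Z : ι → Ω → ℝ := fun i ω => S i ω * g (X i ω)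
  have hmul : Measurable fun p : E × ℝ => p.2 * g p.1 := measurable_snd.mul (hg.comp measurable_fst)
  have hZ_ident : ∀ i, IdentDistrib (Z i) (Z i₀) P P := fun i =>
    IdentDistrib.comp ⟨((hX i).prodMk (hS i)).aemeasurable,
      ((hX i₀).prodMk (hS i₀)).aemeasurable, hident i⟩ hmul
  have hZ₀ : MemLp (Z i₀) 2 P :=
    (memLp_top_of_bound (hg.comp (hX i₀)).aestronglyMeasurable C
      (ae_of_all _ fun ω => hgC (X i₀ ω))).mul' hS₀
  have hZ : ∀ i, MemLp (Z i) 2 P := fun i => (hZ_ident i).memLp_iff.2 hZ₀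
  have hmean : ∀ i, ∫ ω, Z i ω ∂P = ∫ x, y x * g x ∂P.map (X i₀) := fun i => by
    rw [(hZ_ident i).integral_eq, integral_mul_comp_eq_of_condExp_eq (hX i₀)
      (hS₀.integrable one_le_two) hcond hy hg hgC]
  have hsq : ∀ i, ∫ ω, Z i ω ^ 2 ∂P ≤ C ^ 2 * ∫ ω, S i₀ ω ^ 2 ∂P := fun i => by
    have hsq_eq : ∫ ω, Z i ω ^ 2 ∂P = ∫ ω, Z i₀ ω ^ 2 ∂P :=
      ((hZ_ident i).comp (measurable_id.pow_const 2)).integral_eq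
    rw [hsq_eq, ← integral_const_mul]
    refine integral_mono hZ₀.integrable_sq (hS₀.integrable_sq.const_mul _) fun ω => ?_
    simp only [Z, mul_pow, mul_comm (C ^ 2)]
    exact mul_le_mul_of_nonneg_left (sq_le_sq' (neg_le_of_abs_le (hgC _)) (le_of_abs_le (hgC _)))
      (sq_nonneg _)
  have hind : Pairwise fun i j => IndepFun (Z i) (Z j) P := fun i j hij =>
    (hindep.comp (fun _ => fun p : E × ℝ => p.2 * g p.1) fun _ => hmul).indepFun hij
  refine ⟨?_, integral_sq_sampleMean_sub_le hZ hind hmean hsq⟩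
  exact (((memLp_finsetSum _ fun i _ => hZ i).const_mul _).sub (memLp_const _)).integrable_sq

end MonteCarlo

theorem stmt_11_general (d : ℕ)
    {Ω : Type*} [MeasurableSpace Ω] (P : Measure Ω) [IsProbabilityMeasure P]
    (ν : Measure (Fin d → ℝ)) [IsProbabilityMeasure ν]
    (φ : (Fin d → ℕ) → (Fin d → ℝ) → ℝ)
    (hφmeas : ∀ k, Measurable (φ k))
    (hortho : ∀ k k' : Fin d → ℕ,
      ∫ x, φ k x * φ k' x ∂ν = if k = k' then 1 else 0)
    (hcomplete : ∀ v : (Fin d → ℝ) → ℝ, Measurable v →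
      Integrable (fun x => (v x)^2) ν →
      (∀ k, ∫ x, v x * φ k x ∂ν = 0) → ∀ᵐ x ∂ν, v x = 0)
    (y : (Fin d → ℝ) → ℝ) (hymeas : Measurable y)
    (hyL2 : Integrable (fun x => (y x)^2) ν)
    (α : (Fin d → ℕ) → ℝ) (hα : ∀ k, α k = ∫ x, y x * φ k x ∂ν)
    (Γ : Finset (Fin d → ℕ))
    (M : ℕ) (hM : 0 < M)
    (X : Fin M → Ω → (Fin d → ℝ)) (S : Fin M → Ω → ℝ)
    (hXmeas : ∀ m, Measurable (X m)) (hSmeas : ∀ m, Measurable (S m))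
    (hindep : ProbabilityTheory.iIndepFun
      (fun (m : Fin M) ω => (X m ω, S m ω)) P)
    (hident : ∀ m : Fin M,
      Measure.map (fun ω => (X m ω, S m ω)) P
        = Measure.map (fun ω => (X ⟨0, hM⟩ ω, S ⟨0, hM⟩ ω)) P)
    (hlaw : Measure.map (X ⟨0, hM⟩) P = ν)
    (hSL2 : Integrable (fun ω => (S ⟨0, hM⟩ ω)^2) P)
    (hcond : P[fun ω => S ⟨0, hM⟩ ω | MeasurableSpace.comap (X ⟨0, hM⟩) inferInstance]
      =ᵐ[P] fun ω => y (X ⟨0, hM⟩ ω))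
    (Cφ : (Fin d → ℕ) → ℝ) (hCφ : ∀ k x, |φ k x| ≤ Cφ k) :
    ∫ ω, (∫ x, ((∑ k ∈ Γ, ((M : ℝ)⁻¹ * ∑ m, S m ω * φ k (X m ω)) * φ k x) - y x)^2 ∂ν) ∂P
      ≤ (∑' k : {k : Fin d → ℕ // k ∉ Γ}, (α k)^2)
        + ((∑ k ∈ Γ, (Cφ k)^2) / M) * ∫ ω, (S ⟨0, hM⟩ ω)^2 ∂P := by
  obtain rfl : α = fun k => ∫ x, y x * φ k x ∂ν := funext hα
  have hφ : ∀ k, MemLp (φ k) 2 ν := fun k =>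
    MemLp.of_bound (hφmeas k).aestronglyMeasurable (Cφ k) (ae_of_all _ (hCφ k))
  have hy : MemLp y 2 ν := (memLp_two_iff_integrable_sq hymeas.aestronglyMeasurable).2 hyL2
  have hS₀ : MemLp (S ⟨0, hM⟩) 2 P :=
    (memLp_two_iff_integrable_sq (hSmeas _).aestronglyMeasurable).2 hSL2
  have hcoef := fun k => integral_sq_sampleMean_mul_comp_sub_le hXmeas hSmeas hindep hident hS₀
    hcond hymeas (hφmeas k) (hCφ k)
  simp only [hlaw, Fintype.card_fin] at hcoef
  have htail : ∫ x, y x ^ 2 ∂ν - ∑ k ∈ Γ, (∫ x, y x * φ k x ∂ν) ^ 2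
      = ∑' k : {k // k ∉ Γ}, (∫ x, y x * φ k x ∂ν) ^ 2 := by
    have hparseval := hasSum_sq_integral_mul_of_complete hφ hortho hcomplete hy
    rw [← hparseval.tsum_eq, ← hparseval.summable.sum_add_tsum_subtype_compl Γ, add_sub_cancel_left]
  have hvariance : ∑ k ∈ Γ, ∫ ω, ((M : ℝ)⁻¹ * ∑ m, S m ω * φ k (X m ω)
        - ∫ x, y x * φ k x ∂ν) ^ 2 ∂P
      ≤ (∑ k ∈ Γ, Cφ k ^ 2) / M * ∫ ω, S ⟨0, hM⟩ ω ^ 2 ∂P := by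
    calc _ ≤ ∑ k ∈ Γ, (Cφ k ^ 2 * ∫ ω, S ⟨0, hM⟩ ω ^ 2 ∂P) / M :=
          Finset.sum_le_sum fun k _ => (hcoef k).2
      _ = _ := by rw [← Finset.sum_div, ← Finset.sum_mul]; ring
  simp_rw [integral_sq_sum_mul_sub hφ hortho hy]
  rw [integral_add (integrable_finsetSum _ fun k _ => (hcoef k).1) (integrable_const _),
    integral_finsetSum _ fun k _ => (hcoef k).1, integral_const, probReal_univ, one_smul, htail]
  linarith

theorem stmt_11 (d : ℕ) (hd : 1 ≤ d)
    {Ω : Type*} [MeasurableSpace Ω] (P : Measure Ω) [IsProbabilityMeasure P]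
    (ν : Measure (Fin d → ℝ)) [IsProbabilityMeasure ν]
    (φ : (Fin d → ℕ) → (Fin d → ℝ) → ℝ)
    (hφmeas : ∀ k, Measurable (φ k))
    (hortho : ∀ k k' : Fin d → ℕ,
      ∫ x, φ k x * φ k' x ∂ν = if k = k' then 1 else 0)
    (hcomplete : ∀ v : (Fin d → ℝ) → ℝ, Measurable v →
      Integrable (fun x => (v x)^2) ν →
      (∀ k, ∫ x, v x * φ k x ∂ν = 0) → ∀ᵐ x ∂ν, v x = 0)
    (y : (Fin d → ℝ) → ℝ) (hymeas : Measurable y)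
    (hyL2 : Integrable (fun x => (y x)^2) ν)
    (α : (Fin d → ℕ) → ℝ) (hα : ∀ k, α k = ∫ x, y x * φ k x ∂ν)
    (Γ : Finset (Fin d → ℕ))
    (M : ℕ) (hM : 0 < M)
    (X : Fin M → Ω → (Fin d → ℝ)) (S : Fin M → Ω → ℝ)
    (hXmeas : ∀ m, Measurable (X m)) (hSmeas : ∀ m, Measurable (S m))
    (hindep : ProbabilityTheory.iIndepFun
      (fun (m : Fin M) ω => (X m ω, S m ω)) P)
    (hident : ∀ m : Fin M,
      Measure.map (fun ω => (X m ω, S m ω)) P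
        = Measure.map (fun ω => (X ⟨0, hM⟩ ω, S ⟨0, hM⟩ ω)) P)
    (hlaw : Measure.map (X ⟨0, hM⟩) P = ν)
    (hSL2 : Integrable (fun ω => (S ⟨0, hM⟩ ω)^2) P)
    (hcond : P[fun ω => S ⟨0, hM⟩ ω | MeasurableSpace.comap (X ⟨0, hM⟩) inferInstance]
      =ᵐ[P] fun ω => y (X ⟨0, hM⟩ ω))
    (Cφ : (Fin d → ℕ) → ℝ) (hCφ : ∀ k x, |φ k x| ≤ Cφ k) :
    ∫ ω, (∫ x, ((∑ k ∈ Γ, ((M : ℝ)⁻¹ * ∑ m, S m ω * φ k (X m ω)) * φ k x) - y x)^2 ∂ν) ∂P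
      ≤ (∑' k : {k : Fin d → ℕ // k ∉ Γ}, (α k)^2)
        + ((∑ k ∈ Γ, (Cφ k)^2) / M) * ∫ ω, (S ⟨0, hM⟩ ω)^2 ∂P :=
  stmt_11_general d P ν φ hφmeas hortho hcomplete y hymeas hyL2 α hα Γ M hM X S hXmeas hSmeas hindep
    hident hlaw hSL2 hcond Cφ hCφ
end

section
/- Fix μ > 0, q ≥ 0, Λ ≥ 0, and dimension d ≥ 1. There exists a finite constant C_ν(Λ) > 0 such that for all λ ∈ [0,Λ] and all y ∈ ℝ^d, ∫_{ℝ^d} ν(y + z√λ) · (1+|y|²)^q / (1+|y+z√λ|²)^q · e^{-|z|²/2}/(2π)^{d/2} dz ≤ C_ν(Λ) ν(y), where ν(x) = ∏_{l=1}^d c_μ (1+x_l²)^{-(μ+1)/2} is the product Student's t-density. -/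
open MeasureTheory Real Set


lemma aux_key (a b : ℝ) : 1 + a^2 ≤ 2*(1+(a+b)^2)*(1+b^2) := by
  nlinarith [sq_nonneg (a+b), sq_nonneg b, sq_nonneg ((a+b)*b), sq_nonneg (a+2*b)]

lemma one_add_sum_le_prod {ι : Type*} (a : ι → ℝ) (h : ∀ i, 0 ≤ a i) (s : Finset ι) :
    1 + ∑ i ∈ s, a i ≤ ∏ i ∈ s, (1 + a i) := by
  classical
  induction s using Finset.cons_induction with
  | empty => simp
  | cons i s hi ih =>
    rw [Finset.sum_cons, Finset.prod_cons]
    have h3 : 0 ≤ ∑ j ∈ s, a j := Finset.sum_nonneg (fun j _ => h j)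
    nlinarith [h i]

lemma rpow_bound {e A B D : ℝ} (he : 0 ≤ e) (hA : 0 < A) (hB : 0 < B) (hle : A ≤ B * D) :
    B^(-e) ≤ A^(-e) * D^e := by
  have hD : 0 ≤ D := by
    by_contra hcon
    push_neg at hcon
    nlinarith
  have h2 : B⁻¹ ≤ A⁻¹ * D := by
    rw [inv_eq_one_div, ← div_eq_inv_mul, div_le_div_iff₀ hB hA]
    nlinarith
  calc B^(-e) = (B⁻¹)^e := by rw [Real.rpow_neg hB.le, Real.inv_rpow hB.le]
    _ ≤ (A⁻¹ * D)^e := Real.rpow_le_rpow (by positivity) h2 he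
    _ = A^(-e) * D^e := by
        rw [Real.mul_rpow (by positivity) hD, Real.rpow_neg hA.le, Real.inv_rpow hA.le]

lemma div_rpow_bound {q A B D : ℝ} (hq : 0 ≤ q) (hA : 0 < A) (hB : 0 < B) (hle : A ≤ B * D) :
    A^q / B^q ≤ D^q := by
  have hD : 0 ≤ D := by
    by_contra hcon
    push_neg at hcon
    nlinarith
  rw [← Real.div_rpow hA.le hB.le]
  exact Real.rpow_le_rpow (by positivity) (by rw [div_le_iff₀ hB]; nlinarith) hq


lemma scalar_bound {Λ p : ℝ} (hΛ : 0 ≤ Λ) (hp : 0 ≤ p) (t : ℝ) :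
    (1 + Λ*t^2)^p ≤ (1+Λ)^p * 2^p * (1 + t^(2*⌈p⌉₊)) := by
  set n := ⌈p⌉₊
  have h1 : (1 + Λ*t^2 : ℝ) ≤ (1+Λ) * (1+t^2) := by nlinarith [sq_nonneg t]
  have h2 : (1 + Λ*t^2)^p ≤ ((1+Λ)*(1+t^2))^p :=
    Real.rpow_le_rpow (by positivity) h1 hp
  have h3 : ((1+Λ)*(1+t^2))^p = (1+Λ)^p * (1+t^2)^p :=
    Real.mul_rpow (by positivity) (by positivity)
  have hnn : t^(2*n) = (t^2)^n := by rw [pow_mul]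
  have htn : (0:ℝ) ≤ t^(2*n) := by rw [hnn]; positivity
  have h4 : (1+t^2)^p ≤ 2^p * (1 + t^(2*n)) := by
    rcases le_total (t^2) 1 with ht | ht
    · have h5 : (1+t^2)^p ≤ 2^p := Real.rpow_le_rpow (by positivity) (by linarith) hp
      nlinarith [Real.rpow_nonneg (by norm_num : (0:ℝ) ≤ 2) p]
    · have h5 : (1+t^2)^p ≤ (2*t^2)^p := Real.rpow_le_rpow (by positivity) (by linarith) hp
      have h6 : (2*t^2)^p = 2^p * (t^2)^p := Real.mul_rpow (by norm_num) (by positivity)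
      have h7 : (t^2)^p ≤ (t^2)^(n:ℝ) :=
        Real.rpow_le_rpow_of_exponent_le ht (Nat.le_ceil p)
      have h8 : (t^2)^(n:ℝ) = t^(2*n) := by rw [Real.rpow_natCast, hnn]
      have h9 : (0:ℝ) ≤ 2^p := by positivity
      nlinarith
  calc (1 + Λ*t^2)^p ≤ (1+Λ)^p * (1+t^2)^p := by rw [← h3]; exact h2
    _ ≤ (1+Λ)^p * (2^p * (1 + t^(2*n))) :=
        mul_le_mul_of_nonneg_left h4 (by positivity)
    _ = (1+Λ)^p * 2^p * (1 + t^(2*n)) := by ring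

lemma integrable_g {Λ p : ℝ} (hΛ : 0 ≤ Λ) (hp : 0 ≤ p) :
    Integrable (fun t : ℝ => (1 + Λ*t^2)^p * Real.exp (-(t^2)/2)) := by
  have hb : (0:ℝ) < 1/2 := by norm_num
  set n := ⌈p⌉₊
  have h1 : Integrable (fun t : ℝ => Real.exp (-(1/2) * t^2)) :=
    integrable_exp_neg_mul_sq hb
  have h2 : Integrable (fun t : ℝ => t^(2*n) * Real.exp (-(1/2) * t^2)) := by
    have h := integrable_rpow_mul_exp_neg_mul_sq hb (s := ((2*n : ℕ) : ℝ))
      (by have : (0:ℝ) ≤ ((2*n : ℕ) : ℝ) := Nat.cast_nonneg _; linarith)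
    have heq : (fun x : ℝ => x ^ (((2*n : ℕ) : ℝ)) * Real.exp (-(1/2) * x^2))
        = fun t : ℝ => t^(2*n) * Real.exp (-(1/2) * t^2) := by
      funext t; rw [Real.rpow_natCast]
    rwa [heq] at h
  have hbd : Integrable (fun t : ℝ =>
      (1+Λ)^p * 2^p * (Real.exp (-(1/2) * t^2) + t^(2*n) * Real.exp (-(1/2) * t^2))) :=
    (h1.add h2).const_mul _
  apply hbd.mono'
  · apply Continuous.aestronglyMeasurable
    apply Continuous.mul
    · apply Continuous.rpow_const (by continuity)
      intro x
      left
      positivity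
    · continuity
  · filter_upwards with t
    rw [Real.norm_eq_abs, abs_of_nonneg (by positivity)]
    have he : -(t^2)/2 = -(1/2) * t^2 := by ring
    rw [he]
    have hexp : (0:ℝ) < Real.exp (-(1/2) * t^2) := Real.exp_pos _
    have hsb := scalar_bound hΛ hp t
    have htn : (0:ℝ) ≤ t^(2*n) := by rw [pow_mul]; positivity
    nlinarith [mul_le_mul_of_nonneg_right hsb hexp.le]



lemma key_bound {d : ℕ} {μ q Λ lam cμ : ℝ} (hμ : 0 < μ) (hq : 0 ≤ q) (hcμ : 0 ≤ cμ)
    (hlam0 : 0 ≤ lam) (hlamΛ : lam ≤ Λ) (y z : Fin d → ℝ) :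
    (∏ l, cμ * (1 + (y l + Real.sqrt lam * z l)^2) ^ (-(μ+1)/2))
      * ((1 + ∑ l, (y l)^2) ^ q / (1 + ∑ l, (y l + Real.sqrt lam * z l)^2) ^ q)
      * (Real.exp (-(∑ l, (z l)^2) / 2) / (2 * Real.pi) ^ ((d : ℝ)/2))
    ≤ (∏ l, cμ * (1 + (y l)^2) ^ (-(μ+1)/2)) *
      ((2^q * ((2:ℝ)^((μ+1)/2))^d / (2*Real.pi)^((d:ℝ)/2)) *
        ∏ l, ((1 + Λ*(z l)^2)^(q+(μ+1)/2) * Real.exp (-((z l)^2)/2))) := by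
  have hΛ : 0 ≤ Λ := le_trans hlam0 hlamΛ
  set e : ℝ := (μ+1)/2 with he
  have he0 : 0 < e := by rw [he]; linarith
  have hsq : Real.sqrt lam ^ 2 = lam := Real.sq_sqrt hlam0
  obtain ⟨w, hw⟩ : ∃ w : Fin d → ℝ, ∀ l, w l = y l + Real.sqrt lam * z l :=
    ⟨_, fun l => rfl⟩
  simp only [← hw]
  -- coordinatewise inequality
  have hcoord : ∀ l, 1 + (y l)^2 ≤ (1 + (w l)^2) * (2 * (1 + Λ * (z l)^2)) := by
    intro l
    have h1 := aux_key (y l) (Real.sqrt lam * z l)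
    have h2 : (Real.sqrt lam * z l)^2 = lam * (z l)^2 := by rw [mul_pow, hsq]
    have h3 : lam * (z l)^2 ≤ Λ * (z l)^2 :=
      mul_le_mul_of_nonneg_right hlamΛ (sq_nonneg _)
    rw [hw l]
    nlinarith [sq_nonneg (y l + Real.sqrt lam * z l), sq_nonneg (z l), h2 ▸ h1]
  have hA : ∀ l, (1 + (w l)^2) ^ (-(μ+1)/2)
      ≤ (1 + (y l)^2) ^ (-(μ+1)/2) * (2*(1+Λ*(z l)^2))^e := by
    intro l
    have hneg : (-(μ+1)/2 : ℝ) = -e := by rw [he]; ring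
    rw [hneg]
    exact rpow_bound he0.le (by positivity) (by positivity) (hcoord l)
  -- sum inequality
  have hsumy : 1 + ∑ l, (y l)^2 ≤ (1 + ∑ l, (w l)^2) * (2*(1 + Λ * ∑ l, (z l)^2)) := by
    have hterm : ∀ l : Fin d, (y l)^2 ≤ 2*(w l)^2 + 2*Λ*(z l)^2 := by
      intro l
      have h2 : (Real.sqrt lam * z l)^2 = lam * (z l)^2 := by rw [mul_pow, hsq]
      have h3 : lam * (z l)^2 ≤ Λ * (z l)^2 :=
        mul_le_mul_of_nonneg_right hlamΛ (sq_nonneg _)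
      rw [hw l]
      nlinarith [sq_nonneg (y l + 2*(Real.sqrt lam * z l)), h2]
    have hsum : ∑ l, (y l)^2 ≤ 2*(∑ l, (w l)^2) + 2*Λ*(∑ l, (z l)^2) := by
      calc ∑ l, (y l)^2 ≤ ∑ l, (2*(w l)^2 + 2*Λ*(z l)^2) :=
            Finset.sum_le_sum (fun l _ => hterm l)
        _ = 2*(∑ l, (w l)^2) + 2*Λ*(∑ l, (z l)^2) := by
            rw [Finset.sum_add_distrib, ← Finset.mul_sum, ← Finset.mul_sum]
    have hSw : (0:ℝ) ≤ ∑ l, (w l)^2 := Finset.sum_nonneg fun l _ => sq_nonneg _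
    have hSz : (0:ℝ) ≤ ∑ l, (z l)^2 := Finset.sum_nonneg fun l _ => sq_nonneg _
    nlinarith [mul_nonneg (mul_nonneg hΛ hSz) hSw]
  have hSz : (0:ℝ) ≤ ∑ l, (z l)^2 := Finset.sum_nonneg fun l _ => sq_nonneg _
  have hR : (1 + ∑ l, (y l)^2)^q / (1 + ∑ l, (w l)^2)^q
      ≤ (2*(1+Λ*∑ l, (z l)^2))^q :=
    div_rpow_bound hq (by positivity) (by positivity) hsumy
  have hprod1 : 1 + Λ * ∑ l, (z l)^2 ≤ ∏ l, (1 + Λ*(z l)^2) := by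
    have h := one_add_sum_le_prod (fun l => Λ*(z l)^2) (fun l => by positivity) Finset.univ
    rwa [← Finset.mul_sum] at h
  have hR2 : (2*(1+Λ*∑ l, (z l)^2))^q ≤ 2^q * ∏ l, (1+Λ*(z l)^2)^q := by
    have h1 : (2*(1+Λ*∑ l, (z l)^2))^q = 2^q * (1+Λ*∑ l, (z l)^2)^q :=
      Real.mul_rpow (by norm_num) (by positivity)
    have h2 : (1+Λ*∑ l, (z l)^2)^q ≤ (∏ l, (1+Λ*(z l)^2))^q :=
      Real.rpow_le_rpow (by positivity) hprod1 hq
    have h3 : (∏ l, (1+Λ*(z l)^2))^q = ∏ l, (1+Λ*(z l)^2)^q :=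
      (Real.finset_prod_rpow Finset.univ _ (fun l _ => by positivity) q).symm
    rw [h1, ← h3]
    have h4 : (0:ℝ) ≤ (2:ℝ)^q := by positivity
    exact mul_le_mul_of_nonneg_left h2 h4
  -- product bound
  have hP : (∏ l, cμ * (1 + (w l)^2) ^ (-(μ+1)/2))
      ≤ (∏ l, cμ * (1 + (y l)^2) ^ (-(μ+1)/2)) * (((2:ℝ)^e)^d * ∏ l, (1+Λ*(z l)^2)^e) := by
    have step : (∏ l, cμ * (1 + (w l)^2) ^ (-(μ+1)/2))
        ≤ ∏ l, (cμ * (1 + (y l)^2) ^ (-(μ+1)/2)) * ((2:ℝ)^e * (1+Λ*(z l)^2)^e) := by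
      apply Finset.prod_le_prod
      · intro l _
        exact mul_nonneg hcμ (Real.rpow_nonneg (by positivity) _)
      · intro l _
        have h2e : (2*(1+Λ*(z l)^2))^e = (2:ℝ)^e * (1+Λ*(z l)^2)^e :=
          Real.mul_rpow (by norm_num) (by positivity)
        calc cμ * (1 + (w l)^2) ^ (-(μ+1)/2)
            ≤ cμ * ((1 + (y l)^2) ^ (-(μ+1)/2) * (2*(1+Λ*(z l)^2))^e) :=
              mul_le_mul_of_nonneg_left (hA l) hcμ
          _ = (cμ * (1 + (y l)^2) ^ (-(μ+1)/2)) * ((2:ℝ)^e * (1+Λ*(z l)^2)^e) := by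
              rw [h2e]; ring
    calc (∏ l, cμ * (1 + (w l)^2) ^ (-(μ+1)/2))
        ≤ ∏ l, (cμ * (1 + (y l)^2) ^ (-(μ+1)/2)) * ((2:ℝ)^e * (1+Λ*(z l)^2)^e) := step
      _ = (∏ l, cμ * (1 + (y l)^2) ^ (-(μ+1)/2)) * (((2:ℝ)^e)^d * ∏ l, (1+Λ*(z l)^2)^e) := by
          rw [Finset.prod_mul_distrib]
          congr 1
          rw [Finset.prod_mul_distrib, Finset.prod_const, Finset.card_univ, Fintype.card_fin]
  -- gaussian factorization
  have hG : Real.exp (-(∑ l, (z l)^2) / 2) = ∏ l, Real.exp (-((z l)^2)/2) := by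
    rw [← Real.exp_sum]
    congr 1
    simp [neg_div, Finset.sum_div]
  -- nonnegativity facts
  have hPnn : 0 ≤ ∏ l, cμ * (1 + (w l)^2) ^ (-(μ+1)/2) :=
    Finset.prod_nonneg fun l _ => mul_nonneg hcμ (Real.rpow_nonneg (by positivity) _)
  have hNynn : 0 ≤ ∏ l, cμ * (1 + (y l)^2) ^ (-(μ+1)/2) :=
    Finset.prod_nonneg fun l _ => mul_nonneg hcμ (Real.rpow_nonneg (by positivity) _)
  have hRnn : 0 ≤ (1 + ∑ l, (y l)^2)^q / (1 + ∑ l, (w l)^2)^q := by positivity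
  have hGnn : 0 ≤ Real.exp (-(∑ l, (z l)^2) / 2) / (2 * Real.pi) ^ ((d : ℝ)/2) := by
    positivity
  have hT1nn : 0 ≤ (∏ l, cμ * (1 + (y l)^2) ^ (-(μ+1)/2)) * (((2:ℝ)^e)^d * ∏ l, (1+Λ*(z l)^2)^e) :=
    mul_nonneg hNynn (mul_nonneg (by positivity) (Finset.prod_nonneg fun l _ => by positivity))
  have hT2nn : 0 ≤ 2^q * ∏ l, (1+Λ*(z l)^2)^q :=
    mul_nonneg (by positivity) (Finset.prod_nonneg fun l _ => by positivity)
  -- combine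
  have hmain : (∏ l, cμ * (1 + (w l)^2) ^ (-(μ+1)/2))
      * ((1 + ∑ l, (y l)^2)^q / (1 + ∑ l, (w l)^2)^q)
      * (Real.exp (-(∑ l, (z l)^2) / 2) / (2 * Real.pi) ^ ((d : ℝ)/2))
      ≤ ((∏ l, cμ * (1 + (y l)^2) ^ (-(μ+1)/2)) * (((2:ℝ)^e)^d * ∏ l, (1+Λ*(z l)^2)^e))
        * (2^q * ∏ l, (1+Λ*(z l)^2)^q)
        * (Real.exp (-(∑ l, (z l)^2) / 2) / (2 * Real.pi) ^ ((d : ℝ)/2)) := by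
    apply mul_le_mul_of_nonneg_right _ hGnn
    exact mul_le_mul hP (le_trans hR hR2) hRnn hT1nn
  refine le_trans hmain (le_of_eq ?_)
  rw [hG, Finset.prod_mul_distrib, Finset.prod_mul_distrib]
  have hpe : ∏ l, (1+Λ*(z l)^2)^(q+e) = (∏ l, (1+Λ*(z l)^2)^e) * (∏ l, (1+Λ*(z l)^2)^q) := by
    rw [← Finset.prod_mul_distrib]
    refine Finset.prod_congr rfl (fun l _ => ?_)
    rw [add_comm q e]
    exact Real.rpow_add (by positivity) e q
  rw [hpe]
  ring



theorem stmt_13 (μ q Λ : ℝ) (hμ : 0 < μ) (hq : 0 ≤ q) (hΛ : 0 ≤ Λ)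
    (d : ℕ) (hd : 1 ≤ d)
    (cμ : ℝ) (hc : cμ = Real.Gamma ((μ+1)/2) / (Real.Gamma (μ/2) * Real.sqrt Real.pi))
    (ν : (Fin d → ℝ) → ℝ)
    (hν : ∀ x : Fin d → ℝ, ν x = ∏ l, cμ * (1 + (x l)^2) ^ (-(μ+1)/2)) :
    ∃ C : ℝ, 0 < C ∧ ∀ lam ∈ Set.Icc (0:ℝ) Λ, ∀ y : Fin d → ℝ,
      (∫ z : Fin d → ℝ,
        ν (fun l => y l + Real.sqrt lam * z l)
          * ((1 + ∑ l, (y l)^2) ^ q / (1 + ∑ l, (y l + Real.sqrt lam * z l)^2) ^ q)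
          * (Real.exp (-(∑ l, (z l)^2) / 2) / (2 * Real.pi) ^ ((d : ℝ)/2)))
        ≤ C * ν y := by
  have hπ : (0:ℝ) < Real.pi := Real.pi_pos
  have hcμ : 0 < cμ := by
    rw [hc]
    have h1 : 0 < Real.Gamma ((μ+1)/2) := Real.Gamma_pos_of_pos (by linarith)
    have h2 : 0 < Real.Gamma (μ/2) := Real.Gamma_pos_of_pos (by linarith)
    have h3 : 0 < Real.sqrt Real.pi := Real.sqrt_pos.mpr hπ
    positivity
  have hp0 : (0:ℝ) ≤ q + (μ+1)/2 := by linarith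
  have hgint : Integrable (fun t : ℝ => (1 + Λ*t^2)^(q+(μ+1)/2) * Real.exp (-(t^2)/2)) :=
    integrable_g hΛ hp0
  have hint : Integrable (fun z : Fin d → ℝ =>
      ∏ l, ((1 + Λ*(z l)^2)^(q+(μ+1)/2) * Real.exp (-((z l)^2)/2))) :=
    Integrable.fintype_prod (f := fun _ : Fin d => fun t : ℝ =>
      (1 + Λ*t^2)^(q+(μ+1)/2) * Real.exp (-(t^2)/2)) (fun _ => hgint)
  set K : ℝ := 2^q * ((2:ℝ)^((μ+1)/2))^d / (2*Real.pi)^((d:ℝ)/2) with hK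
  have hK0 : (0:ℝ) ≤ K := by rw [hK]; positivity
  have hintK : Integrable (fun z : Fin d → ℝ =>
      K * ∏ l, ((1 + Λ*(z l)^2)^(q+(μ+1)/2) * Real.exp (-((z l)^2)/2))) :=
    hint.const_mul K
  have hprodnn : ∀ z : Fin d → ℝ,
      (0:ℝ) ≤ ∏ l, ((1 + Λ*(z l)^2)^(q+(μ+1)/2) * Real.exp (-((z l)^2)/2)) :=
    fun z => Finset.prod_nonneg fun l _ => by positivity
  have hInt0 : (0:ℝ) ≤ ∫ z : Fin d → ℝ,
      K * ∏ l, ((1 + Λ*(z l)^2)^(q+(μ+1)/2) * Real.exp (-((z l)^2)/2)) :=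
    integral_nonneg (fun z => mul_nonneg hK0 (hprodnn z))
  refine ⟨(∫ z : Fin d → ℝ,
      K * ∏ l, ((1 + Λ*(z l)^2)^(q+(μ+1)/2) * Real.exp (-((z l)^2)/2))) + 1,
    by linarith, ?_⟩
  intro lam hlam y
  obtain ⟨hlam0, hlamΛ⟩ := hlam
  have hνy : 0 ≤ ν y := by
    rw [hν]
    exact Finset.prod_nonneg fun l _ =>
      mul_nonneg hcμ.le (Real.rpow_nonneg (by positivity) _)
  have hle : ∀ z : Fin d → ℝ,
      ν (fun l => y l + Real.sqrt lam * z l)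
        * ((1 + ∑ l, (y l)^2) ^ q / (1 + ∑ l, (y l + Real.sqrt lam * z l)^2) ^ q)
        * (Real.exp (-(∑ l, (z l)^2) / 2) / (2 * Real.pi) ^ ((d : ℝ)/2))
      ≤ ν y * (K * ∏ l, ((1 + Λ*(z l)^2)^(q+(μ+1)/2) * Real.exp (-((z l)^2)/2))) := by
    intro z
    rw [hν, hν]
    exact key_bound hμ hq hcμ.le hlam0 hlamΛ y z
  have hnn : ∀ z : Fin d → ℝ,
      (0:ℝ) ≤ ν (fun l => y l + Real.sqrt lam * z l)
        * ((1 + ∑ l, (y l)^2) ^ q / (1 + ∑ l, (y l + Real.sqrt lam * z l)^2) ^ q)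
        * (Real.exp (-(∑ l, (z l)^2) / 2) / (2 * Real.pi) ^ ((d : ℝ)/2)) := by
    intro z
    have h1 : 0 ≤ ν (fun l => y l + Real.sqrt lam * z l) := by
      rw [hν]
      exact Finset.prod_nonneg fun l _ =>
        mul_nonneg hcμ.le (Real.rpow_nonneg (by positivity) _)
    have h2 : (0:ℝ) ≤ (1 + ∑ l, (y l)^2) ^ q /
        (1 + ∑ l, (y l + Real.sqrt lam * z l)^2) ^ q := by
      have hS1 : (0:ℝ) ≤ ∑ l, (y l)^2 := Finset.sum_nonneg fun l _ => sq_nonneg _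
      have hS2 : (0:ℝ) ≤ ∑ l, (y l + Real.sqrt lam * z l)^2 :=
        Finset.sum_nonneg fun l _ => sq_nonneg _
      positivity
    have h3 : (0:ℝ) ≤ Real.exp (-(∑ l, (z l)^2) / 2) / (2 * Real.pi) ^ ((d : ℝ)/2) := by
      positivity
    exact mul_nonneg (mul_nonneg h1 h2) h3
  calc (∫ z : Fin d → ℝ,
        ν (fun l => y l + Real.sqrt lam * z l)
          * ((1 + ∑ l, (y l)^2) ^ q / (1 + ∑ l, (y l + Real.sqrt lam * z l)^2) ^ q)
          * (Real.exp (-(∑ l, (z l)^2) / 2) / (2 * Real.pi) ^ ((d : ℝ)/2)))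
      ≤ ∫ z : Fin d → ℝ,
        ν y * (K * ∏ l, ((1 + Λ*(z l)^2)^(q+(μ+1)/2) * Real.exp (-((z l)^2)/2))) :=
        integral_mono_of_nonneg (Filter.Eventually.of_forall hnn)
          (hintK.const_mul (ν y)) (Filter.Eventually.of_forall hle)
    _ = ν y * ∫ z : Fin d → ℝ,
        K * ∏ l, ((1 + Λ*(z l)^2)^(q+(μ+1)/2) * Real.exp (-((z l)^2)/2)) :=
        integral_const_mul _ _
    _ ≤ ((∫ z : Fin d → ℝ,
        K * ∏ l, ((1 + Λ*(z l)^2)^(q+(μ+1)/2) * Real.exp (-((z l)^2)/2))) + 1) * ν y := by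
        nlinarith
end
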